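/- Every tree-decodable (q_1,…,q_n)-ary code is a prefix code: if two distinct leaves of a decoding tree are given, the associated words are prefix-free, because in the channel corresponding to the class of their lowest common ancestor neither word's component is a prefix of the other's. -/

import Mathlib

/-- A multi-channel decoding tree for an `n`-channel system with alphabet sizes `q i`:
every internal node is assigned a class `i ∈ {1,…,n}`, and its outgoing edges are labeled by
distinct symbols of the `i`-th alphabet (so it has at most `q i` children); `children a`
is the subtree reached by the edge labeled `a`, if present. -/
inductive DecTree (n : ℕ) (q : Fin n → ℕ) : Type
  | leaf : DecTree n q
  | node (i : Fin n) (children : Fin (q i) → Option (DecTree n q)) : DecTree n q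

/-- Well-formedness of a decoding tree: every internal node has at least one child and all
its subtrees are well-formed. -/
inductive DecTree.WF {n : ℕ} {q : Fin n → ℕ} : DecTree n q → Prop
  | leaf : DecTree.WF .leaf
  | node (i : Fin n) (c : Fin (q i) → Option (DecTree n q)) :
      (∃ a, c a ≠ none) → (∀ a t, c a = some t → DecTree.WF t) →
      DecTree.WF (.node i c)

/-- `LeafWord t w` holds iff `w` is the word associated with some leaf of the decoding tree
`t`: for each internal node of class `i` on the root-to-leaf path, the outgoing edge label is
appended to the `i`-th component. -/
inductive DecTree.LeafWord {n : ℕ} {q : Fin n → ℕ} :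
    DecTree n q → (∀ i, List (Fin (q i))) → Prop
  | leaf : DecTree.LeafWord .leaf (fun _ => [])
  | node {i : Fin n} {c : Fin (q i) → Option (DecTree n q)} {a : Fin (q i)}
      {t : DecTree n q} {w : ∀ i', List (Fin (q i'))} :
      c a = some t → DecTree.LeafWord t w →
      DecTree.LeafWord (.node i c) (Function.update w i (a :: w i))

/-!
Induct on the first leaf's root-to-leaf path. If both paths leave the root through the same edge,
they prepend the same symbol to the same channel, which preserves prefix-freeness of the words of
the subtree. Otherwise the two edge labels differ, so in the root's channel the components start
with different symbols and neither is a prefix of the other.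
-/

open Function

section PrefixFree

variable {ι : Type*} [DecidableEq ι] {α : ι → Type*}

def PrefixFree (w v : ∀ i, List (α i)) : Prop :=
  ∃ i, ¬ w i <+: v i ∧ ¬ v i <+: w i

theorem PrefixFree.update_cons {w v : ∀ i, List (α i)} (h : PrefixFree w v) (i : ι) (a : α i) :
    PrefixFree (update w i (a :: w i)) (update v i (a :: v i)) := by
  obtain ⟨j, hwv, hvw⟩ := h
  refine ⟨j, ?_⟩
  rcases eq_or_ne j i with rfl | hji
  · simpa [List.cons_prefix_cons] using ⟨hwv, hvw⟩
  · simpa [update_of_ne hji] using ⟨hwv, hvw⟩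

theorem prefixFree_update_cons_of_ne (w v : ∀ i, List (α i)) {i : ι} {a b : α i} (hab : a ≠ b) :
    PrefixFree (update w i (a :: w i)) (update v i (b :: v i)) :=
  ⟨i, by simp [List.cons_prefix_cons, hab, Ne.symm hab]⟩

end PrefixFree

theorem DecTree.LeafWord.prefixFree {n : ℕ} {q : Fin n → ℕ} {t : DecTree n q}
    {w v : ∀ i, List (Fin (q i))} (hw : t.LeafWord w) (hv : t.LeafWord v) (hne : w ≠ v) :
    PrefixFree w v := by
  induction hw generalizing v with
  | leaf =>
    cases hv
    exact absurd rfl hne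
  | @node i c a t w hca _ ih =>
    cases hv with | @node _ _ b t' v hcb hv =>
    rcases eq_or_ne a b with rfl | hab
    · obtain rfl : t = t' := Option.some_injective _ (hca.symm.trans hcb)
      exact (ih hv fun h => hne (h ▸ rfl)).update_cons i a
    · exact prefixFree_update_cons_of_ne w v hab

theorem tree_decodable_is_prefix_code_general (n : ℕ) (q : Fin n → ℕ)
    (t : DecTree n q)
    (w v : ∀ i, List (Fin (q i))) (hw : t.LeafWord w) (hv : t.LeafWord v) (hne : w ≠ v) :
    ∃ i, ¬ (w i <+: v i) ∧ ¬ (v i <+: w i) :=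
  hw.prefixFree hv hne

/-- **Every tree-decodable `(q 1, …, q n)`-ary code is a prefix code**: the words associated
with two distinct leaves of a decoding tree are prefix-free — in the channel corresponding to
the class of their lowest common ancestor neither word's component is a prefix of the
other's. -/
theorem tree_decodable_is_prefix_code (n : ℕ) (q : Fin n → ℕ) (hq : ∀ i, 2 ≤ q i)
    (t : DecTree n q) (hwf : t.WF)
    (w v : ∀ i, List (Fin (q i))) (hw : t.LeafWord w) (hv : t.LeafWord v) (hne : w ≠ v) :
    ∃ i, ¬ (w i <+: v i) ∧ ¬ (v i <+: w i) :=
  tree_decodable_is_prefix_code_general n q t w v hw hv hne
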